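/- Let n ≥ 1, δ : Fin n → ℝ, μ : Fin n → ℝ with μ t > 0 for all t, and let π : ℝ^d → Fin n → ℝ be such that each map w ↦ π w t is differentiable with π w t > 0 for all w, t. Set ρ w t = (π w t)/(μ t) and ρ̄ w t = ρ w t / ∑_u ρ w u, and define the reweighted objective V(w) = ∑_t δ t · ρ̄ w t. Then V is differentiable and ∇V(w) = ∑_t δ t · ρ̄ w t · ( ∇_w log(π w t) − ∑_u ρ̄ w u · ∇_w log(π w u) ). -/

import Mathlib

/-!
If every `f u` is positive with derivative `f u w • s u` (so `s u` is the score, the derivative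
of `log ∘ f u`), the quotient rule gives for the self-normalized weight `p t = f t / ∑ u, f u`
the derivative `p t • (s t - ∑ u, p u • s u)`. Dividing `π · t` by the constant `μ t` does not
change its score, so this applies to `f t = π · t / μ t`, whose self-normalized weight is `ρ̄`.
-/

/-- Normalized importance weight `ρ̄ w t = (π w t / μ t) / ∑ u, π w u / μ u`. -/
noncomputable def rhoBar {d n : ℕ} (μ : Fin n → ℝ)
    (π : EuclideanSpace ℝ (Fin d) → Fin n → ℝ)
    (w : EuclideanSpace ℝ (Fin d)) (t : Fin n) : ℝ :=
  (π w t / μ t) / ∑ u, π w u / μ u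

theorem hasFDerivAt_div_sum_of_score {ι E : Type*} [Fintype ι] [NormedAddCommGroup E]
    [NormedSpace ℝ E] {f : ι → E → ℝ} {s : ι → StrongDual ℝ E} {w : E}
    (hf : ∀ u, HasFDerivAt (f u) (f u w • s u) w) (hpos : ∀ u, 0 < f u w) (t : ι) :
    HasFDerivAt (fun x => f t x / ∑ u, f u x)
      ((f t w / ∑ u, f u w) • (s t - ∑ u, (f u w / ∑ v, f v w) • s u)) w := by
  set S := ∑ u, f u w
  have hS : S ≠ 0 := (Finset.sum_pos (fun u _ => hpos u) ⟨t, Finset.mem_univ t⟩).ne'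
  have hinv : HasFDerivAt (fun x => (∑ u, f u x)⁻¹) (-(S ^ 2)⁻¹ • ∑ u, f u w • s u) w :=
    (hasDerivAt_inv hS).comp_hasFDerivAt w (HasFDerivAt.fun_sum fun u _ => hf u)
  have hmean : ∑ u, (f u w / S) • s u = S⁻¹ • ∑ u, f u w • s u := by
    simp only [Finset.smul_sum, smul_smul, div_eq_inv_mul]
  have hderiv : (f t w / S) • (s t - ∑ u, (f u w / S) • s u)
      = f t w • -(S ^ 2)⁻¹ • ∑ u, f u w • s u + S⁻¹ • f t w • s t := by
    rw [hmean]
    match_scalars <;> field_simp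
  rw [hderiv]
  simpa only [div_eq_mul_inv] using (hf t).fun_mul hinv

theorem hasGradientAt_sum_mul_div_sum_of_score {ι E : Type*} [Fintype ι]
    [NormedAddCommGroup E] [InnerProductSpace ℝ E] [CompleteSpace E]
    {f : ι → E → ℝ} {s : ι → E} {w : E}
    (hf : ∀ u, HasGradientAt (f u) (f u w • s u) w) (hpos : ∀ u, 0 < f u w) (δ : ι → ℝ) :
    HasGradientAt (fun x => ∑ t, δ t * (f t x / ∑ u, f u x))
      (∑ t, (δ t * (f t w / ∑ u, f u w)) • (s t - ∑ u, (f u w / ∑ v, f v w) • s u)) w := by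
  have hf' : ∀ u, HasFDerivAt (f u) (f u w • InnerProductSpace.toDual ℝ E (s u)) w := fun u => by
    simpa only [map_smul] using (hf u).hasFDerivAt
  rw [hasGradientAt_iff_hasFDerivAt]
  simpa only [map_sum, map_smul, map_sub, smul_smul] using
    HasFDerivAt.fun_sum fun t _ => (hasFDerivAt_div_sum_of_score hf' hpos t).const_mul (δ t)

theorem hasGradientAt_div_const_of_gradient_log {E : Type*} [NormedAddCommGroup E]
    [InnerProductSpace ℝ E] [CompleteSpace E] {f : E → ℝ} {w : E}
    (hf : DifferentiableAt ℝ f w) (hw : f w ≠ 0) (c : ℝ) :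
    HasGradientAt (fun x => f x / c) ((f w / c) • gradient (fun x => Real.log (f x)) w) w := by
  rw [(hf.hasFDerivAt.log hw).hasGradientAt.gradient, hasGradientAt_iff_hasFDerivAt,
    map_smul, LinearIsometryEquiv.apply_symm_apply, smul_smul,
    show f w / c * (f w)⁻¹ = c⁻¹ by field_simp]
  simpa only [div_eq_mul_inv] using hf.hasFDerivAt.mul_const c⁻¹

theorem ipsr_objective_gradient_general {d n : ℕ}
    (δ μ : Fin n → ℝ) (hμ : ∀ t, 0 < μ t)
    (π : EuclideanSpace ℝ (Fin d) → Fin n → ℝ)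
    (hdiff : ∀ t, Differentiable ℝ (fun w => π w t))
    (hpos : ∀ w t, 0 < π w t) :
    Differentiable ℝ (fun w => ∑ t, δ t * rhoBar μ π w t)
      ∧ ∀ w, gradient (fun w => ∑ t, δ t * rhoBar μ π w t) w
          = ∑ t, (δ t * rhoBar μ π w t) •
              (gradient (fun w => Real.log (π w t)) w
                - ∑ u, rhoBar μ π w u • gradient (fun w => Real.log (π w u)) w) := by
  have hV : ∀ w, HasGradientAt (fun w => ∑ t, δ t * rhoBar μ π w t)
      (∑ t, (δ t * rhoBar μ π w t) • (gradient (fun w => Real.log (π w t)) w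
        - ∑ u, rhoBar μ π w u • gradient (fun w => Real.log (π w u)) w)) w := fun w =>
    hasGradientAt_sum_mul_div_sum_of_score (f := fun t x => π x t / μ t)
      (fun t => hasGradientAt_div_const_of_gradient_log (hdiff t w) (hpos w t).ne' (μ t))
      (fun t => div_pos (hpos w t) (hμ t)) δ
  exact ⟨fun w => (hV w).differentiableAt, fun w => (hV w).gradient⟩

/-- Score-function form of the gradient of the reweighted IPS/DPM objective
`V(w) = ∑ t, δ t * ρ̄ w t`, where `ρ̄ w t = (π w t / μ t) / ∑ u, π w u / μ u`, each
`w ↦ π w t` being differentiable and positive and `μ t > 0`: `V` is differentiable and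
`∇V(w) = ∑ t, δ t * ρ̄ w t • (∇ log (π w t) − ∑ u, ρ̄ w u • ∇ log (π w u))`. -/
theorem ipsr_objective_gradient {d n : ℕ} (hn : 1 ≤ n)
    (δ μ : Fin n → ℝ) (hμ : ∀ t, 0 < μ t)
    (π : EuclideanSpace ℝ (Fin d) → Fin n → ℝ)
    (hdiff : ∀ t, Differentiable ℝ (fun w => π w t))
    (hpos : ∀ w t, 0 < π w t) :
    Differentiable ℝ (fun w => ∑ t, δ t * rhoBar μ π w t)
      ∧ ∀ w, gradient (fun w => ∑ t, δ t * rhoBar μ π w t) w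
          = ∑ t, (δ t * rhoBar μ π w t) •
              (gradient (fun w => Real.log (π w t)) w
                - ∑ u, rhoBar μ π w u • gradient (fun w => Real.log (π w u)) w) :=
  ipsr_objective_gradient_general δ μ hμ π hdiff hpos
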